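/- Let Re > 0 and Δt > 0, let u⁰, u¹ : ℝ³ → ℝ³ be twice continuously differentiable on an open neighborhood of the closed unit cube Ω = [0,1]³, let p : ℝ³ → ℝ be continuously differentiable there, and set ū := (u⁰ + u¹)/2. Suppose the strong-form midpoint time-discrete Navier–Stokes equation holds at every point of Ω: (u¹ − u⁰)/Δt − ū × (curl ū) + ∇p + Re⁻¹ curl(curl ū) = 0, that div ū = 0 at every point of Ω, that u⁰ × n = 0 and u¹ × n = 0 on ∂Ω, and that p = 0 at every point of ∂Ω. Then the discrete energy law holds: ( ∫_Ω |u¹|² dx − ∫_Ω |u⁰|² dx ) / (2Δt) + Re⁻¹ ∫_Ω |curl ū|² dx = 0. -/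

import Mathlib

open MeasureTheory

noncomputable section

/-- Points of ℝ³, represented as functions `Fin 3 → ℝ`. -/
abbrev R3 : Type := Fin 3 → ℝ

/-- Partial derivative in the `i`-th coordinate direction. -/
noncomputable def pd (i : Fin 3) (f : R3 → ℝ) (x : R3) : ℝ :=
  fderiv ℝ f x (Pi.single i 1)

/-- Curl of a vector field on ℝ³. -/
noncomputable def vcurl (v : R3 → R3) (x : R3) : R3 :=
  ![pd 1 (fun y => v y 2) x - pd 2 (fun y => v y 1) x,
    pd 2 (fun y => v y 0) x - pd 0 (fun y => v y 2) x,
    pd 0 (fun y => v y 1) x - pd 1 (fun y => v y 0) x]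

/-- Divergence of a vector field on ℝ³. -/
noncomputable def vdiv (v : R3 → R3) (x : R3) : ℝ :=
  pd 0 (fun y => v y 0) x + pd 1 (fun y => v y 1) x + pd 2 (fun y => v y 2) x

/-- Gradient of a scalar field on ℝ³. -/
noncomputable def vgrad (f : R3 → ℝ) (x : R3) : R3 := fun i => pd i f x

/-- Euclidean dot product on ℝ³. -/
def dot3 (a b : R3) : ℝ := a 0 * b 0 + a 1 * b 1 + a 2 * b 2

/-- Cross product on ℝ³. -/
def cross3 (a b : R3) : R3 :=
  ![a 1 * b 2 - a 2 * b 1, a 2 * b 0 - a 0 * b 2, a 0 * b 1 - a 1 * b 0]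

/-- The closed unit cube Ω = [0,1]³. -/
def cube : Set R3 := Set.Icc 0 1

/-- `x` lies on one of the two faces of the cube orthogonal to direction `i`. -/
def onFace (x : R3) (i : Fin 3) : Prop := x i = 0 ∨ x i = 1

/-- `x` lies on the boundary ∂Ω of the cube. -/
def onBdry (x : R3) : Prop := x ∈ cube ∧ ∃ i : Fin 3, onFace x i

/-- Tangential boundary condition `v × n = 0` on ∂Ω: on each face of the cube
the two components of `v` tangential to that face vanish. -/
def TangentialBC (v : R3 → R3) : Prop :=
  ∀ x ∈ cube, ∀ i : Fin 3, onFace x i → ∀ j : Fin 3, j ≠ i → v x j = 0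

/-- Normal boundary condition `v · n = 0` on ∂Ω: on each face of the cube
the component of `v` normal to that face vanishes. -/
def NormalBC (v : R3 → R3) : Prop :=
  ∀ x ∈ cube, ∀ i : Fin 3, onFace x i → v x i = 0

/-! Test the momentum equation against `ū`. Since `ū · (ū × curl ū) = 0` and `div ū = 0`, the
product rules for `div (p ū)` and `div (ū × curl ū)` give, for the flux
`F = p ū − Re⁻¹ ū × curl ū`, the pointwise identity `div F = −(ū · D_t u + Re⁻¹ |curl ū|²)`,
and `ū · D_t u = D_t |u|² / 2`. On each face of the cube `p = 0` and the tangential components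
of `ū` vanish, so the normal component of `F` vanishes there and the divergence theorem gives
`∫_Ω div F = 0`. -/

section PartialDerivative

variable {f g : R3 → ℝ} {x : R3}

theorem pd_sub (hf : DifferentiableAt ℝ f x) (hg : DifferentiableAt ℝ g x) (i : Fin 3) :
    pd i (fun y => f y - g y) x = pd i f x - pd i g x := by
  simp [pd, fderiv_fun_sub hf hg]

theorem pd_mul (hf : DifferentiableAt ℝ f x) (hg : DifferentiableAt ℝ g x) (i : Fin 3) :
    pd i (fun y => f y * g y) x = pd i f x * g x + f x * pd i g x := by
  simp only [pd, fderiv_fun_mul hf hg, add_apply, smul_apply,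
    smul_eq_mul]
  ring

theorem pd_const_mul (hf : DifferentiableAt ℝ f x) (c : ℝ) (i : Fin 3) :
    pd i (fun y => c * f y) x = c * pd i f x := by
  simp [pd, fderiv_const_mul hf]

theorem ContDiffOn.pd {U : Set R3} {m n : WithTop ℕ∞} (hf : ContDiffOn ℝ n f U) (hU : IsOpen U)
    (hmn : m + 1 ≤ n) (i : Fin 3) : ContDiffOn ℝ m (pd i f) U :=
  (hf.fderiv_of_isOpen hU hmn).clm_apply contDiffOn_const

end PartialDerivative

theorem ContDiffOn.vcurl {v : R3 → R3} {U : Set R3} {m n : WithTop ℕ∞}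
    (hv : ContDiffOn ℝ n v U) (hU : IsOpen U) (hmn : m + 1 ≤ n) :
    ContDiffOn ℝ m (vcurl v) U := by
  have hd := fun i j => (contDiffOn_pi.1 hv j).pd hU hmn i
  refine contDiffOn_pi.2 fun k => ?_
  fin_cases k
  exacts [(hd 1 2).sub (hd 2 1), (hd 2 0).sub (hd 0 2), (hd 0 1).sub (hd 1 0)]

theorem contDiff_cross3 {n : WithTop ℕ∞} : ContDiff ℝ n fun q : R3 × R3 => cross3 q.1 q.2 := by
  refine contDiff_pi.2 fun k => ?_
  fin_cases k <;> simp [cross3] <;> fun_prop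

theorem dot3_cross3_self (a b : R3) : dot3 a (cross3 a b) = 0 := by
  simp only [dot3, cross3, Matrix.cons_val_zero, Matrix.cons_val_one, Matrix.cons_val]
  ring

theorem ContinuousOn.dot3 {v w : R3 → R3} {s : Set R3} (hv : ContinuousOn v s)
    (hw : ContinuousOn w s) : ContinuousOn (fun x => dot3 (v x) (w x)) s := by
  have hv' := continuousOn_pi.1 hv
  have hw' := continuousOn_pi.1 hw
  simp only [_root_.dot3]
  fun_prop

theorem DifferentiableAt.cross3 {v w : R3 → R3} {x : R3} (hv : DifferentiableAt ℝ v x)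
    (hw : DifferentiableAt ℝ w x) : DifferentiableAt ℝ (fun y => cross3 (v y) (w y)) x :=
  ((contDiff_cross3 (n := 1)).differentiable one_ne_zero).differentiableAt.comp x (hv.prodMk hw)

section Divergence

variable {v w : R3 → R3} {f : R3 → ℝ} {x : R3}

theorem vdiv_sub (hv : DifferentiableAt ℝ v x) (hw : DifferentiableAt ℝ w x) :
    vdiv (fun y => v y - w y) x = vdiv v x - vdiv w x := by
  have hv' := differentiableAt_pi.1 hv
  have hw' := differentiableAt_pi.1 hw
  simp only [vdiv, Pi.sub_apply, pd_sub (hv' _) (hw' _)]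
  ring

theorem vdiv_const_smul (hv : DifferentiableAt ℝ v x) (c : ℝ) :
    vdiv (fun y => c • v y) x = c * vdiv v x := by
  have hv' := differentiableAt_pi.1 hv
  simp only [vdiv, Pi.smul_apply, smul_eq_mul, pd_const_mul (hv' _)]
  ring

theorem vdiv_smul (hf : DifferentiableAt ℝ f x) (hv : DifferentiableAt ℝ v x) :
    vdiv (fun y => f y • v y) x = dot3 (vgrad f x) (v x) + f x * vdiv v x := by
  have hv' := differentiableAt_pi.1 hv
  simp only [vdiv, dot3, vgrad, Pi.smul_apply, smul_eq_mul, pd_mul hf (hv' _)]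
  ring

theorem vdiv_cross3 (hv : DifferentiableAt ℝ v x) (hw : DifferentiableAt ℝ w x) :
    vdiv (fun y => cross3 (v y) (w y)) x =
      dot3 (w x) (vcurl v x) - dot3 (v x) (vcurl w x) := by
  have hv' := differentiableAt_pi.1 hv
  have hw' := differentiableAt_pi.1 hw
  simp only [vdiv, vcurl, dot3, cross3, Matrix.cons_val_zero, Matrix.cons_val_one,
    Matrix.cons_val_two, Matrix.head_cons, Matrix.tail_cons,
    pd_sub ((hv' _).fun_mul (hw' _)) ((hv' _).fun_mul (hw' _)), pd_mul (hv' _) (hw' _)]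
  ring

end Divergence

def energyFlux (c : ℝ) (p : R3 → ℝ) (v : R3 → R3) : R3 → R3 :=
  fun y => p y • v y - c • cross3 (v y) (vcurl v y)

section EnergyFlux

variable {c : ℝ} {p : R3 → ℝ} {v : R3 → R3}

theorem vdiv_energyFlux {x : R3} (hp : DifferentiableAt ℝ p x) (hv : DifferentiableAt ℝ v x)
    (hw : DifferentiableAt ℝ (vcurl v) x) :
    vdiv (energyFlux c p v) x = dot3 (vgrad p x) (v x) + p x * vdiv v x
      - c * (dot3 (vcurl v x) (vcurl v x) - dot3 (v x) (vcurl (vcurl v) x)) := by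
  unfold energyFlux
  rw [vdiv_sub (hp.fun_smul hv) ((hv.cross3 hw).fun_const_smul c), vdiv_smul hp hv,
    vdiv_const_smul (hv.cross3 hw), vdiv_cross3 hv hw]

theorem vdiv_energyFlux_of_momentum {x a : R3} (hp : DifferentiableAt ℝ p x)
    (hv : DifferentiableAt ℝ v x) (hw : DifferentiableAt ℝ (vcurl v) x)
    (hmom : a - cross3 (v x) (vcurl v x) + vgrad p x + c • vcurl (vcurl v) x = 0)
    (hdiv : vdiv v x = 0) :
    vdiv (energyFlux c p v) x = -(dot3 (v x) a + c * dot3 (vcurl v x) (vcurl v x)) := by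
  have htested := congrArg (dot3 (v x)) hmom
  have hcross := dot3_cross3_self (v x) (vcurl v x)
  simp only [dot3, Pi.add_apply, Pi.sub_apply, Pi.smul_apply, Pi.zero_apply, smul_eq_mul]
    at htested hcross
  rw [vdiv_energyFlux hp hv hw, hdiv]
  simp only [dot3]
  linear_combination htested + hcross

theorem ContDiffOn.energyFlux {U : Set R3} {n : WithTop ℕ∞} (hp : ContDiffOn ℝ n p U)
    (hv : ContDiffOn ℝ (n + 1) v U) (hU : IsOpen U) : ContDiffOn ℝ n (energyFlux c p v) U := by
  have hv' := hv.of_le le_self_add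
  exact (hp.smul hv').sub
    ((contDiff_cross3.comp_contDiffOn (hv'.prodMk (hv.vcurl hU le_rfl))).const_smul c)

end EnergyFlux

section BoundaryConditions

variable {v w : R3 → R3}

theorem TangentialBC.add (hv : TangentialBC v) (hw : TangentialBC w) :
    TangentialBC fun x => v x + w x := fun x hx i hi j hj => by
  simp [hv x hx i hi j hj, hw x hx i hi j hj]

theorem TangentialBC.const_smul (hv : TangentialBC v) (c : ℝ) :
    TangentialBC fun x => c • v x := fun x hx i hi j hj => by
  simp [hv x hx i hi j hj]

theorem TangentialBC.normalBC_cross3 (hv : TangentialBC v) (w : R3 → R3) :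
    NormalBC fun x => cross3 (v x) (w x) := by
  intro x hx i hi
  have h := fun j (hj : j ≠ i) => hv x hx i hi j hj
  fin_cases i <;> simp [cross3, h]

theorem NormalBC.sub (hv : NormalBC v) (hw : NormalBC w) : NormalBC fun x => v x - w x :=
  fun x hx i hi => by simp [hv x hx i hi, hw x hx i hi]

theorem NormalBC.const_smul (hv : NormalBC v) (c : ℝ) : NormalBC fun x => c • v x :=
  fun x hx i hi => by simp [hv x hx i hi]

theorem normalBC_smul_of_eq_zero_on_bdry {f : R3 → ℝ} (hf : ∀ x, onBdry x → f x = 0)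
    (v : R3 → R3) : NormalBC fun x => f x • v x :=
  fun x hx i hi => by simp [hf x ⟨hx, i, hi⟩]

theorem normalBC_energyFlux {p : R3 → ℝ} (hp : ∀ x, onBdry x → p x = 0) (hv : TangentialBC v)
    (c : ℝ) : NormalBC (energyFlux c p v) :=
  (normalBC_smul_of_eq_zero_on_bdry hp v).sub ((hv.normalBC_cross3 _).const_smul c)

end BoundaryConditions

theorem integral_vdiv_eq_zero_of_normalBC {F : R3 → R3} {U : Set R3} (hU : IsOpen U)
    (hcube : cube ⊆ U) (hF : ContDiffOn ℝ 1 F U) (hbc : NormalBC F) :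
    ∫ x in cube, vdiv F x = 0 := by
  have hFi := contDiffOn_pi.1 hF
  have hdiv : vdiv F = fun x => ∑ i, fderiv ℝ (fun y => F y i) x (Pi.single i 1) := by
    ext x
    simp [vdiv, pd, Fin.sum_univ_three]
  rw [hdiv, cube, integral_divergence_of_hasFDerivAt_off_countable' 0 1 zero_le_one
    (fun i y => F y i) (fun i y => fderiv ℝ (fun y => F y i) y) ∅ Set.countable_empty
    (fun i => (hFi i).continuousOn.mono hcube) ?_ ?_]
  · have hface : ∀ i (c : ℝ), c = 0 ∨ c = 1 →
        ∀ y ∈ Set.Icc ((0 : R3) ∘ i.succAbove) ((1 : R3) ∘ i.succAbove),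
          F (i.insertNth c y) i = 0 := by
      intro i c hc y hy
      refine hbc _ (Fin.insertNth_mem_Icc.2 ⟨?_, hy⟩) i (by simpa [onFace] using hc)
      rcases hc with rfl | rfl <;> simp
    refine Finset.sum_eq_zero fun i _ => ?_
    rw [setIntegral_eq_zero_of_forall_eq_zero (hface i ((1 : R3) i) (Or.inr rfl)),
      setIntegral_eq_zero_of_forall_eq_zero (hface i ((0 : R3) i) (Or.inl rfl)), sub_zero]
  · intro x hx i
    have hxU : x ∈ U :=
      hcube ⟨fun j => (hx.1 j trivial).1.le, fun j => (hx.1 j trivial).2.le⟩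
    exact (((hFi i).contDiffAt (hU.mem_nhds hxU)).differentiableAt one_ne_zero).hasFDerivAt
  · refine ContinuousOn.integrableOn_compact isCompact_Icc (continuousOn_finsetSum _ fun i _ => ?_)
    exact ((hFi i).pd (m := 0) hU (by norm_num) i).continuousOn.mono hcube

theorem measurableSet_cube : MeasurableSet cube := measurableSet_Icc

theorem isCompact_cube : IsCompact cube := isCompact_Icc

theorem dot3_midpoint_smul_sub (a b : R3) (c : ℝ) :
    dot3 ((2 : ℝ)⁻¹ • (a + b)) (c • (b - a)) = c * ((dot3 b b - dot3 a a) / 2) := by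
  simp only [dot3, Pi.smul_apply, Pi.add_apply, Pi.sub_apply, smul_eq_mul]
  ring

theorem discrete_energy_law_general (Re Δt : ℝ)
    (u0 u1 ub : R3 → R3) (p : R3 → ℝ) (U : Set R3)
    (hU : IsOpen U) (hcube : cube ⊆ U)
    (hu0 : ContDiffOn ℝ 2 u0 U) (hu1 : ContDiffOn ℝ 2 u1 U)
    (hp : ContDiffOn ℝ 1 p U)
    (hub : ub = fun x => (2 : ℝ)⁻¹ • (u0 x + u1 x))
    (hmom : ∀ x ∈ cube,
      Δt⁻¹ • (u1 x - u0 x) - cross3 (ub x) (vcurl ub x) + vgrad p x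
        + Re⁻¹ • vcurl (vcurl ub) x = 0)
    (hdiv : ∀ x ∈ cube, vdiv ub x = 0)
    (hbc0 : TangentialBC u0) (hbc1 : TangentialBC u1)
    (hbcp : ∀ x : R3, onBdry x → p x = 0) :
    ((∫ x in cube, dot3 (u1 x) (u1 x)) - ∫ x in cube, dot3 (u0 x) (u0 x))
        / (2 * Δt)
      + Re⁻¹ * ∫ x in cube, dot3 (vcurl ub x) (vcurl ub x) = 0 := by
  have hub2 : ContDiffOn ℝ 2 ub U := hub ▸ (hu0.add hu1).const_smul _
  have hcurl : ContDiffOn ℝ 1 (vcurl ub) U := hub2.vcurl hU (by norm_num)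
  have hflux : ∫ x in cube, vdiv (energyFlux Re⁻¹ p ub) x = 0 :=
    integral_vdiv_eq_zero_of_normalBC hU hcube (hp.energyFlux hub2 hU)
      (normalBC_energyFlux hbcp (hub ▸ (hbc0.add hbc1).const_smul _) _)
  have hpointwise : ∀ x ∈ cube, vdiv (energyFlux Re⁻¹ p ub) x =
      -(Δt⁻¹ * ((dot3 (u1 x) (u1 x) - dot3 (u0 x) (u0 x)) / 2)
        + Re⁻¹ * dot3 (vcurl ub x) (vcurl ub x)) := by
    intro x hx
    have hxU := hU.mem_nhds (hcube hx)
    rw [vdiv_energyFlux_of_momentum ((hp.contDiffAt hxU).differentiableAt one_ne_zero)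
      ((hub2.contDiffAt hxU).differentiableAt two_ne_zero)
      ((hcurl.contDiffAt hxU).differentiableAt one_ne_zero) (hmom x hx) (hdiv x hx),
      hub, dot3_midpoint_smul_sub]
  have henergy : ∀ {v : R3 → R3}, ContinuousOn v U →
      IntegrableOn (fun x => dot3 (v x) (v x)) cube := fun hv =>
    ((hv.dot3 hv).mono hcube).integrableOn_compact isCompact_cube
  have hE1 := henergy hu1.continuousOn
  have hE0 := henergy hu0.continuousOn
  rw [setIntegral_congr_fun measurableSet_cube hpointwise, integral_neg, neg_eq_zero,
    integral_add (((hE1.sub' hE0).div_const 2).const_mul _)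
      ((henergy hcurl.continuousOn).const_mul _),
    integral_const_mul, integral_const_mul, integral_div, integral_sub hE1 hE0] at hflux
  linear_combination hflux

/-- Discrete energy law for the strong-form midpoint time-discrete
Navier–Stokes equation: (∫|u¹|² − ∫|u⁰|²)/(2Δt) + Re⁻¹∫|curl ū|² = 0. -/
theorem discrete_energy_law (Re Δt : ℝ) (hRe : 0 < Re) (hΔt : 0 < Δt)
    (u0 u1 ub : R3 → R3) (p : R3 → ℝ) (U : Set R3)
    (hU : IsOpen U) (hcube : cube ⊆ U)
    (hu0 : ContDiffOn ℝ 2 u0 U) (hu1 : ContDiffOn ℝ 2 u1 U)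
    (hp : ContDiffOn ℝ 1 p U)
    (hub : ub = fun x => (2 : ℝ)⁻¹ • (u0 x + u1 x))
    (hmom : ∀ x ∈ cube,
      Δt⁻¹ • (u1 x - u0 x) - cross3 (ub x) (vcurl ub x) + vgrad p x
        + Re⁻¹ • vcurl (vcurl ub) x = 0)
    (hdiv : ∀ x ∈ cube, vdiv ub x = 0)
    (hbc0 : TangentialBC u0) (hbc1 : TangentialBC u1)
    (hbcp : ∀ x : R3, onBdry x → p x = 0) :
    ((∫ x in cube, dot3 (u1 x) (u1 x)) - ∫ x in cube, dot3 (u0 x) (u0 x))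
        / (2 * Δt)
      + Re⁻¹ * ∫ x in cube, dot3 (vcurl ub x) (vcurl ub x) = 0 :=
  discrete_energy_law_general Re Δt u0 u1 ub p U hU hcube hu0 hu1 hp hub hmom hdiv hbc0 hbc1 hbcp
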